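/- arXiv:2303.04258 — 2 statements merged into one kernel-verified Lean document; each statement's English description precedes it below -/
import Mathlib

section
/- Let Σ ∈ ℝ^{(d-1)×(d-1)} be symmetric positive definite, m ∈ {1,…,d}, γ ∈ ℝ^{d-1}, and let x ∈ (0,∞)^d with x_m > 0. Then exp[−½ log(x_{−m}/x_m)^⊤ Σ^{-1} log(x_{−m}/x_m) − ½ γ^⊤ Σ^{-1} log(x_{−m}/x_m)] · (1/x_m) equals exp[μ^⊤ log x − ½ (log x)^⊤ Θ (log x)], where μ ∈ ℝ^d has entries μ_j = −(Σ^{-1}γ)_{j'}/2 for j ≠ m and μ_m = ∑_k (Σ^{-1}γ)_k/2 − 1, and Θ is the symmetric zero-row-sum matrix constructed from Σ^{-1} as in the H\"usler–Reiss reparametrization. -/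
open Matrix BigOperators

/-!
Write `y = log x` and let `A` be the contrast matrix sending `y` to the log-ratios
`(y_k - y_m)_{k ≠ m}`. The hypotheses on `Θ` say exactly that `Θ = Aᵀ Σ⁻¹ A`, so the quadratic
forms on both sides agree, and those on `μ` say that `μ = -½ Aᵀ Σ⁻¹ γ - e_m`, so `μᵀ y` is the
linear term on the left plus `-y_m = log (1 / x_m)`.
-/

section anchorDiff

-- `R` is explicit: with `R` left to unification, `(anchorDiff m)ᵀ * S` picks up the default
-- `CStarMatrix` product instance.
variable (R : Type*) [CommRing R] {n : ℕ}

def anchorDiff (m : Fin (n + 1)) : Matrix (Fin n) (Fin (n + 1)) R :=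
  Matrix.of fun k i => (if i = m.succAbove k then 1 else 0) - if i = m then 1 else 0

variable {R}

theorem anchorDiff_mulVec (m : Fin (n + 1)) (y : Fin (n + 1) → R) :
    anchorDiff R m *ᵥ y = fun k => y (m.succAbove k) - y m := by
  ext k
  simp [anchorDiff, mulVec, dotProduct, sub_mul, Finset.sum_sub_distrib]

theorem transpose_anchorDiff_mulVec_succAbove (m : Fin (n + 1)) (v : Fin n → R) (j : Fin n) :
    ((anchorDiff R m)ᵀ *ᵥ v) (m.succAbove j) = v j := by
  simp [anchorDiff, mulVec, dotProduct, Fin.succAbove_ne]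

theorem transpose_anchorDiff_mulVec_self (m : Fin (n + 1)) (v : Fin n → R) :
    ((anchorDiff R m)ᵀ *ᵥ v) m = -∑ k, v k := by
  simp [anchorDiff, mulVec, dotProduct, (Fin.succAbove_ne _ _).symm]

theorem eq_transpose_anchorDiff_mul_mul_anchorDiff {S : Matrix (Fin n) (Fin n) R}
    (hS : S.IsSymm) {m : Fin (n + 1)} {Θ : Matrix (Fin (n + 1)) (Fin (n + 1)) R}
    (hoff : ∀ j k, Θ (m.succAbove j) (m.succAbove k) = S j k)
    (hrowm : ∀ j, Θ (m.succAbove j) m = -∑ l, S j l)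
    (hcolm : ∀ j, Θ m (m.succAbove j) = -∑ l, S j l)
    (hmm : Θ m m = ∑ k, ∑ l, S k l) :
    Θ = (anchorDiff R m)ᵀ * S * anchorDiff R m := by
  have hcolsum : ∀ j, ∑ k, S k j = ∑ l, S j l := fun j =>
    Finset.sum_congr rfl fun l _ => hS.apply j l
  ext i j
  cases i using Fin.succAboveCases m <;> cases j using Fin.succAboveCases m <;>
    simp [mul_apply, anchorDiff, Fin.succAbove_ne, (Fin.succAbove_ne _ _).symm, hoff, hrowm, hcolm,
      hmm.trans Finset.sum_comm, hcolsum]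

theorem dotProduct_eq_neg_half_dotProduct_anchorDiff_mulVec_sub {K : Type*} [Field K]
    {m : Fin (n + 1)} {v : Fin n → K} {μ : Fin (n + 1) → K}
    (hμoff : ∀ j, μ (m.succAbove j) = -v j / 2) (hμm : μ m = (∑ k, v k) / 2 - 1)
    (y : Fin (n + 1) → K) :
    μ ⬝ᵥ y = -(1 / 2) * (v ⬝ᵥ anchorDiff K m *ᵥ y) - y m := by
  have hμ : μ = -(1 / 2 : K) • ((anchorDiff K m)ᵀ *ᵥ v) - Pi.single m 1 := by
    ext i
    cases i using Fin.succAboveCases m with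
    | x =>
      simp only [hμm, Pi.sub_apply, Pi.smul_apply, smul_eq_mul, transpose_anchorDiff_mulVec_self,
        Pi.single_eq_same]
      ring
    | p j =>
      simp only [hμoff, Pi.sub_apply, Pi.smul_apply, smul_eq_mul,
        transpose_anchorDiff_mulVec_succAbove, Pi.single_eq_of_ne (Fin.succAbove_ne m j)]
      ring
  rw [hμ, sub_dotProduct, smul_dotProduct, single_one_dotProduct, mulVec_transpose,
    ← dotProduct_mulVec, smul_eq_mul]

end anchorDiff

theorem dotProduct_transpose_mul_mul_mulVec {R ι κ : Type*} [CommRing R] [Fintype ι] [Fintype κ]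
    (A : Matrix κ ι R) (S : Matrix κ κ R) (y : ι → R) :
    y ⬝ᵥ (Aᵀ * S * A) *ᵥ y = A *ᵥ y ⬝ᵥ S *ᵥ A *ᵥ y := by
  rw [← mulVec_mulVec, ← mulVec_mulVec, dotProduct_mulVec, vecMul_transpose]

/-- Core identity of the reparametrization lemma: the anchored
Gaussian-type exponential times `1/x_m` equals
`exp(μᵀ log x − ½ (log x)ᵀ Θ (log x))` for the reparametrized `μ` and `Θ`. -/
theorem stmt_5 {n : ℕ} (Sig : Matrix (Fin n) (Fin n) ℝ) (hSig : Sig.PosDef)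
    (m : Fin (n + 1)) (γ : Fin n → ℝ)
    (x : Fin (n + 1) → ℝ) (hx : ∀ j, 0 < x j)
    (μ : Fin (n + 1) → ℝ)
    (hμoff : ∀ j : Fin n, μ (m.succAbove j) = -(Sig⁻¹ *ᵥ γ) j / 2)
    (hμm : μ m = (∑ k, (Sig⁻¹ *ᵥ γ) k) / 2 - 1)
    (Θ : Matrix (Fin (n + 1)) (Fin (n + 1)) ℝ)
    (hoff : ∀ j k : Fin n, Θ (m.succAbove j) (m.succAbove k) = Sig⁻¹ j k)
    (hrowm : ∀ j : Fin n, Θ (m.succAbove j) m = -∑ l, Sig⁻¹ j l)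
    (hcolm : ∀ j : Fin n, Θ m (m.succAbove j) = -∑ l, Sig⁻¹ j l)
    (hmm : Θ m m = ∑ k, ∑ l, Sig⁻¹ k l) :
    Real.exp
        (-(1 / 2) * ((fun k : Fin n => Real.log (x (m.succAbove k) / x m)) ⬝ᵥ
            Sig⁻¹ *ᵥ (fun k : Fin n => Real.log (x (m.succAbove k) / x m)))
          - (1 / 2) * (γ ⬝ᵥ Sig⁻¹ *ᵥ
              (fun k : Fin n => Real.log (x (m.succAbove k) / x m))))
        * (1 / x m)
      = Real.exp
          (μ ⬝ᵥ (fun j => Real.log (x j))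
            - (1 / 2) * ((fun j => Real.log (x j)) ⬝ᵥ Θ *ᵥ
                (fun j => Real.log (x j)))) := by
  have hS : Sig⁻¹.IsSymm := (isHermitian_iff_isSymm.mp hSig.isHermitian).inv
  set y : Fin (n + 1) → ℝ := fun j => Real.log (x j)
  have hu : (fun k => Real.log (x (m.succAbove k) / x m)) = anchorDiff ℝ m *ᵥ y := by
    rw [anchorDiff_mulVec]
    ext k
    exact Real.log_div (hx _).ne' (hx m).ne'
  have hxm : 1 / x m = Real.exp (-y m) := by rw [Real.exp_neg, Real.exp_log (hx m), one_div]
  have hγ : ∀ u, γ ⬝ᵥ Sig⁻¹ *ᵥ u = Sig⁻¹ *ᵥ γ ⬝ᵥ u := fun u => by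
    conv_lhs => rw [← hS.eq]
    rw [dotProduct_transpose_mulVec, dotProduct_comm]
  rw [hu, hxm, ← Real.exp_add, eq_transpose_anchorDiff_mul_mul_anchorDiff hS hoff hrowm hcolm hmm,
    dotProduct_transpose_mul_mul_mulVec,
    dotProduct_eq_neg_half_dotProduct_anchorDiff_mulVec_sub hμoff hμm, hγ]
  ring_nf
end

section
/- For the tridiagonal matrix Θ ∈ ℝ^{d×d} with Θ_{11} = Θ_{dd} = √d, Θ_{jj} = 2√d for 1 < j < d, Θ_{j,j+1} = Θ_{j+1,j} = −√d, and all other entries zero, one has: Θ is symmetric, Θ1 = 0, and for the variogram Γ_{ij} := |i−j|/√d and any m, the matrix Σ[m] defined by Σ_{kl} := (Γ_{k'm} + Γ_{ml'} − Γ_{k'l'})/2 satisfies (Σ[m])^{-1} = Θ_{−m,−m}. -/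
open Matrix BigOperators

/-- integer tridiagonal pattern -/
noncomputable def tM (n i j : ℕ) : ℝ :=
  if i = j then (if i = 0 ∨ i = n+1 then 1 else 2)
  else if i + 1 = j ∨ j + 1 = i then -1 else 0

def aZ (m u j : ℕ) : ℤ := |(j:ℤ) - m| + |(m:ℤ) - u| - |(j:ℤ) - u|

noncomputable def sR (m u j : ℕ) : ℝ := |(j:ℝ) - m| + |(m:ℝ) - u| - |(j:ℝ) - u|

lemma sR_eq (m u j : ℕ) : sR m u j = ((aZ m u j : ℤ) : ℝ) := by
  unfold sR aZ; push_cast; ring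

lemma sR_self (m u : ℕ) : sR m u m = 0 := by
  unfold sR; simp

lemma tM_decomp (n i j : ℕ) : tM n i j =
    2*(if j = i then (1:ℝ) else 0) - (if j = i+1 then 1 else 0) - (if i = j+1 then 1 else 0)
    - (if j = i ∧ i = 0 then 1 else 0) - (if j = i ∧ i = n+1 then 1 else 0) := by
  unfold tM
  split_ifs <;> first | (exfalso; omega) | norm_num

lemma rowsum (n i : ℕ) (hi : i ≤ n+1) (g : ℕ → ℝ) :
    ∑ j ∈ Finset.range (n+2), tM n i j * g j =
      2*g i - (if i+1 ≤ n+1 then g (i+1) else 0) - (if 1 ≤ i then g (i-1) else 0)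
      - (if i = 0 then g 0 else 0) - (if i = n+1 then g (n+1) else 0) := by
  simp only [tM_decomp, sub_mul, mul_assoc, ite_mul, one_mul, zero_mul]
  rw [Finset.sum_sub_distrib, Finset.sum_sub_distrib, Finset.sum_sub_distrib,
    Finset.sum_sub_distrib, ← Finset.mul_sum]
  have h1 : ∑ j ∈ Finset.range (n+2), (if j = i then g j else 0) = g i := by
    rw [Finset.sum_ite_eq']
    simp [Nat.lt_succ_iff, hi, Nat.lt_of_le_of_lt hi (Nat.lt_succ_self _)]
  have h2 : ∑ j ∈ Finset.range (n+2), (if j = i+1 then g j else 0)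
      = if i+1 ≤ n+1 then g (i+1) else 0 := by
    rw [Finset.sum_ite_eq']
    simp [Finset.mem_range, Nat.lt_succ_iff]
  have h3 : ∑ j ∈ Finset.range (n+2), (if i = j+1 then g j else 0)
      = if 1 ≤ i then g (i-1) else 0 := by
    rcases i with _ | k
    · simp
    · simp only [Nat.succ_sub_one, Nat.le_add_left 1 k, if_true]
      have : ∀ j, (if k+1 = j+1 then g j else 0) = (if k = j then g j else 0) := by
        intro j; simp [Nat.add_right_cancel_iff]
      simp_rw [this]
      rw [Finset.sum_ite_eq]
      simp [Finset.mem_range]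
      omega
  have h4 : ∑ j ∈ Finset.range (n+2), (if j = i ∧ i = 0 then g j else 0)
      = if i = 0 then g 0 else 0 := by
    rcases eq_or_ne i 0 with rfl | h
    · simp
    · simp [h]
  have h5 : ∑ j ∈ Finset.range (n+2), (if j = i ∧ i = n+1 then g j else 0)
      = if i = n+1 then g (n+1) else 0 := by
    rcases eq_or_ne i (n+1) with rfl | h
    · simp
    · simp [h]
  rw [h1, h2, h3, h4, h5]

lemma keyZ (n m i u : ℕ) (hi : i ≤ n+1) (hu : u ≤ n+1) (hm : m ≤ n+1)
    (him : i ≠ m) (hum : u ≠ m) :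
    2 * aZ m u i - (if i+1 ≤ n+1 then aZ m u (i+1) else 0)
      - (if 1 ≤ i then aZ m u (i-1) else 0)
      - (if i = 0 then aZ m u 0 else 0) - (if i = n+1 then aZ m u (n+1) else 0)
    = if i = u then 2 else 0 := by
  simp only [aZ, Int.abs_eq_natAbs]
  split_ifs <;> omega

lemma keyR (n m i u : ℕ) (hi : i ≤ n+1) (hu : u ≤ n+1) (hm : m ≤ n+1)
    (him : i ≠ m) (hum : u ≠ m) :
    2 * sR m u i - (if i+1 ≤ n+1 then sR m u (i+1) else 0)
      - (if 1 ≤ i then sR m u (i-1) else 0)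
      - (if i = 0 then sR m u 0 else 0) - (if i = n+1 then sR m u (n+1) else 0)
    = if i = u then 2 else 0 := by
  have h := keyZ n m i u hi hu hm him hum
  have hcast : ∀ (c : Prop) [Decidable c] (x : ℤ),
      (if c then ((x:ℤ):ℝ) else 0) = (((if c then x else 0 : ℤ)) : ℝ) := by
    intros c _ x; split_ifs <;> simp
  have h2 := congrArg (fun z : ℤ => (z : ℝ)) h
  calc 2 * sR m u i - (if i+1 ≤ n+1 then sR m u (i+1) else 0)
      - (if 1 ≤ i then sR m u (i-1) else 0)
      - (if i = 0 then sR m u 0 else 0) - (if i = n+1 then sR m u (n+1) else 0)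
      = ((2 * aZ m u i - (if i+1 ≤ n+1 then aZ m u (i+1) else 0)
        - (if 1 ≤ i then aZ m u (i-1) else 0)
        - (if i = 0 then aZ m u 0 else 0)
        - (if i = n+1 then aZ m u (n+1) else 0) : ℤ) : ℝ) := by
        simp only [sR_eq, hcast]; push_cast; ring
    _ = ((if i = u then (2:ℤ) else 0 : ℤ) : ℝ) := by rw [h]
    _ = if i = u then 2 else 0 := by split_ifs <;> simp

lemma theta_eq (n : ℕ) (a b : Fin (n+2)) :
    (if a = b then
        (if a.val = 0 ∨ a.val = n + 1 then Real.sqrt (n + 2)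
          else 2 * Real.sqrt (n + 2))
      else if a.val + 1 = b.val ∨ b.val + 1 = a.val then -Real.sqrt (n + 2)
      else 0)
    = Real.sqrt (n+2) * tM n a.val b.val := by
  unfold tM
  rcases eq_or_ne a b with rfl | hab
  · simp only [if_pos rfl]
    split_ifs <;> first | (exfalso; omega) | ring
  · have : ¬ a.val = b.val := fun h => hab (Fin.val_injective h)
    simp only [if_neg hab, if_neg this]
    split_ifs <;> ring

/-- Brownian-motion example: for `d = n + 2`, the tridiagonal
matrix `Θ` with `√d` at the corner diagonal entries, `2√d` at the interior
diagonal entries, and `−√d` on the off-diagonals is symmetric, has zero row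
sums, and for the variogram `Γ_{ij} = |i−j|/√d` and every anchor `m`, the
anchored covariance matrix `Σ[m]` satisfies `(Σ[m])⁻¹ = Θ_{−m,−m}`. -/
theorem stmt_16 {n : ℕ}
    (Θ : Matrix (Fin (n + 2)) (Fin (n + 2)) ℝ)
    (hΘ : Θ = Matrix.of fun i j : Fin (n + 2) =>
      if i = j then
        (if i.val = 0 ∨ i.val = n + 1 then Real.sqrt (n + 2)
          else 2 * Real.sqrt (n + 2))
      else if i.val + 1 = j.val ∨ j.val + 1 = i.val then -Real.sqrt (n + 2)
      else 0)
    (Γ : Matrix (Fin (n + 2)) (Fin (n + 2)) ℝ)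
    (hΓ : Γ = Matrix.of fun i j : Fin (n + 2) =>
      |(i.val : ℝ) - (j.val : ℝ)| / Real.sqrt (n + 2)) :
    Θ.IsSymm ∧ Θ *ᵥ (fun _ => 1) = 0 ∧
    ∀ m : Fin (n + 2),
      (Matrix.of fun k l : Fin (n + 1) =>
        (Γ (m.succAbove k) m + Γ m (m.succAbove l)
          - Γ (m.succAbove k) (m.succAbove l)) / 2)⁻¹
        = Θ.submatrix m.succAbove m.succAbove := by
  subst hΘ hΓ
  have hd : (0:ℝ) < Real.sqrt (n+2) := Real.sqrt_pos.mpr (by positivity)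
  have hd0 : Real.sqrt (n+2) ≠ 0 := ne_of_gt hd
  refine ⟨?_, ?_, ?_⟩
  · -- symmetry
    rw [Matrix.IsSymm]
    ext i j
    simp only [Matrix.transpose_apply, Matrix.of_apply]
    rcases eq_or_ne i j with rfl | hij
    · rfl
    · have hji : j ≠ i := Ne.symm hij
      rw [if_neg hij, if_neg hji]
      split_ifs <;> first | (exfalso; omega) | rfl
  · -- zero row sums
    funext i
    simp only [Matrix.mulVec, dotProduct, Matrix.of_apply, mul_one, Pi.zero_apply]
    have hrw : ∀ j : Fin (n+2),
        (if i = j then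
          (if i.val = 0 ∨ i.val = n + 1 then Real.sqrt (n + 2)
            else 2 * Real.sqrt (n + 2))
        else if i.val + 1 = j.val ∨ j.val + 1 = i.val then -Real.sqrt (n + 2)
        else 0) = Real.sqrt (n+2) * tM n i.val j.val := fun j => theta_eq n i j
    simp only [hrw]
    rw [← Finset.mul_sum]
    have : ∑ j : Fin (n+2), tM n i.val j.val
        = ∑ j ∈ Finset.range (n+2), tM n i.val j * 1 := by
      rw [← Fin.sum_univ_eq_sum_range (fun j => tM n i.val j * 1) (n+2)]
      simp
    rw [this, rowsum n i.val (Fin.is_le i) (fun _ => 1)]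
    have hi := Fin.is_le i
    have : (2*(1:ℝ) - (if i.val+1 ≤ n+1 then 1 else 0) - (if 1 ≤ i.val then 1 else 0)
        - (if i.val = 0 then 1 else 0) - (if i.val = n+1 then 1 else 0)) = 0 := by
      split_ifs <;> first | (exfalso; omega) | norm_num
    rw [this, mul_zero]
  · -- inverse
    intro m
    apply Matrix.inv_eq_left_inv
    ext k l
    rw [Matrix.mul_apply, Matrix.one_apply]
    simp only [Matrix.submatrix_apply, Matrix.of_apply]
    set i := (m.succAbove k).val with hidef
    set u := (m.succAbove l).val with hudef
    have hsummand : ∀ j : Fin (n+1),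
        (if m.succAbove k = m.succAbove j then
          (if (m.succAbove k).val = 0 ∨ (m.succAbove k).val = n + 1 then Real.sqrt (n + 2)
            else 2 * Real.sqrt (n + 2))
        else if (m.succAbove k).val + 1 = (m.succAbove j).val ∨
            (m.succAbove j).val + 1 = (m.succAbove k).val then -Real.sqrt (n + 2)
        else 0) *
        ((|((m.succAbove j).val : ℝ) - (m.val:ℝ)| / Real.sqrt (n+2)
          + |(m.val : ℝ) - ((m.succAbove l).val:ℝ)| / Real.sqrt (n+2)
          - |((m.succAbove j).val : ℝ) - ((m.succAbove l).val:ℝ)| / Real.sqrt (n+2)) / 2)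
        = tM n i (m.succAbove j).val * sR m.val u (m.succAbove j).val / 2 := by
      intro j
      rw [theta_eq n (m.succAbove k) (m.succAbove j)]
      unfold sR
      field_simp
      ring
    rw [Finset.sum_congr rfl (fun j _ => hsummand j)]
    have hsplit := Fin.sum_univ_succAbove
      (fun w : Fin (n+2) => tM n i w.val * sR m.val u w.val / 2) m
    have hzero : tM n i m.val * sR m.val u m.val / 2 = 0 := by
      rw [sR_self]; ring
    have hsum : ∑ j : Fin (n+1), tM n i (m.succAbove j).val * sR m.val u (m.succAbove j).val / 2
        = ∑ w : Fin (n+2), tM n i w.val * sR m.val u w.val / 2 := by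
      rw [hsplit, hzero, zero_add]
    rw [hsum, ← Finset.sum_div,
      Fin.sum_univ_eq_sum_range (fun w => tM n i w * sR m.val u w) (n+2),
      rowsum n i (Fin.is_le _) (sR m.val u)]
    have him : i ≠ m.val := fun h => Fin.succAbove_ne m k (Fin.val_injective h)
    have hum : u ≠ m.val := fun h => Fin.succAbove_ne m l (Fin.val_injective h)
    rw [keyR n m.val i u (Fin.is_le _) (Fin.is_le _) (Fin.is_le _) him hum]
    have hiu : (i = u) ↔ (k = l) := by
      constructor
      · intro h
        exact Fin.succAbove_right_injective (Fin.val_injective h)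
      · intro h; subst h; rfl
    rw [if_congr hiu rfl rfl]
    split_ifs <;> norm_num
end
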